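/- Let N be a stable phylogenetic network on X, let M = U(N), and let C be an X-set of M. Then ξ̄_C⁺(V(M_C⁺)) ⊆ V(M)^C/∼. -/

import Mathlib

/- ------------------------------------------------------------------
Common combinatorial framework for phylogenetic networks, MUL-trees,
un-fold and fold-up operations, following Huber--Moulton--Scornavacca--
Steel and the paper "Three applications of un-fold/fold-up operations
for stable phylogenetic networks".

A `Net` is a rooted directed multigraph: `arcs u v` records the number
of parallel arcs from `u` to `v`.  Directed walks are recorded as lists
of *arc tokens* `(u, v, i)` (the `i`-th parallel arc from `u` to `v`),
so that parallel arcs give rise to different directed paths.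
------------------------------------------------------------------- -/

open Classical

universe u v w

namespace Phylo

/-- A rooted directed multigraph on the vertex type `V`:  `arcs u v` is the
number of parallel arcs from `u` to `v`, `verts` is the vertex set and
`root` the root. -/
structure Net (V : Type u) where
  verts : Set V
  arcs : V → V → ℕ
  root : V

/-- An arc token: `(u, v, i)` stands for the `i`-th parallel arc from `u` to `v`. -/
abbrev Arc (V : Type u) := V × V × ℕ

namespace Net

variable {V : Type u}

/-- The arc token `a` is a genuine arc of `N`. -/
def okArc (N : Net V) (a : Arc V) : Prop :=
  a.1 ∈ N.verts ∧ a.2.1 ∈ N.verts ∧ a.2.2 < N.arcs a.1 a.2.1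

/-- `l` is a directed walk (possibly trivial) starting at the vertex `u`,
recorded as the list of its arc tokens. -/
def WalkFrom (N : Net V) (u : V) (l : List (Arc V)) : Prop :=
  u ∈ N.verts ∧ (∀ a ∈ l, N.okArc a) ∧
    List.Chain' (fun a b : Arc V => a.2.1 = b.1) l ∧
    ∀ a ∈ l.head?, (a : Arc V).1 = u

/-- The end vertex of the walk `l` starting at `u`. -/
def endOf (u : V) (l : List (Arc V)) : V := (l.getLastD (u, u, 0)).2.1

/-- The list of vertices visited by a walk `l` starting at `u`. -/
def walkVerts (u : V) (l : List (Arc V)) : List V := u :: l.map (fun a => a.2.1)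

/-- The inner (non-endpoint) vertices of a walk `l` starting at `u`. -/
def innerVerts (u : V) (l : List (Arc V)) : List V := ((walkVerts u l).dropLast).drop 1

/-- `w` is *below* `u` (there is a directed path from `u` to `w`; every
vertex is below itself).  Equivalently, `u` is an *ancestor* of `w`. -/
def Reaches (N : Net V) (u w : V) : Prop := ∃ l, N.WalkFrom u l ∧ endOf u l = w

/-- The indegree of a vertex (counting parallel arcs). -/
noncomputable def inDeg (N : Net V) (v : V) : ℕ := ∑ᶠ u, N.arcs u v

/-- The outdegree of a vertex (counting parallel arcs). -/
noncomputable def outDeg (N : Net V) (v : V) : ℕ := ∑ᶠ u, N.arcs v u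

/-- A leaf is a vertex of outdegree zero. -/
def IsLeaf (N : Net V) (v : V) : Prop := v ∈ N.verts ∧ N.outDeg v = 0

/-- An interior vertex is a non-leaf vertex. -/
def IsInterior (N : Net V) (v : V) : Prop := v ∈ N.verts ∧ N.outDeg v ≠ 0

/-- A tree vertex is a vertex of indegree at most one. -/
def IsTreeVert (N : Net V) (v : V) : Prop := v ∈ N.verts ∧ N.inDeg v ≤ 1

/-- A hybrid vertex is a vertex of indegree at least two. -/
def IsHybrid (N : Net V) (v : V) : Prop := v ∈ N.verts ∧ 2 ≤ N.inDeg v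

/-- The one-step arc relation. -/
def ArcRel (N : Net V) (u v : V) : Prop := 0 < N.arcs u v

/-- `N` contains no directed cycle. -/
def Acyclic (N : Net V) : Prop := ∀ v, ¬ Relation.TransGen N.ArcRel v v

/-- A rooted connected pseudoDAG: a finite rooted directed (multi)graph with
no directed cycles in which every vertex is reachable from the root. -/
structure IsPseudoDAG (N : Net V) : Prop where
  finite : N.verts.Finite
  rootMem : N.root ∈ N.verts
  arcMem : ∀ u v, N.arcs u v ≠ 0 → u ∈ N.verts ∧ v ∈ N.verts
  acyclic : N.Acyclic
  connected : ∀ v ∈ N.verts, N.Reaches N.root v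

/-- An `X`-network: a rooted connected pseudoDAG whose leaf set is `X`, where
the root has indegree zero, every non-leaf tree vertex has outdegree two,
every hybrid vertex has outdegree one, and every leaf has total degree one. -/
structure IsXNetwork (N : Net V) (X : Set V) extends IsPseudoDAG N : Prop where
  rootInDeg : N.inDeg N.root = 0
  leafSet : ∀ v, N.IsLeaf v ↔ v ∈ X
  treeOutDeg : ∀ v ∈ N.verts, N.inDeg v ≤ 1 → N.outDeg v ≠ 0 → N.outDeg v = 2
  hybridOutDeg : ∀ v ∈ N.verts, 2 ≤ N.inDeg v → N.outDeg v = 1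
  leafInDeg : ∀ v ∈ X, N.inDeg v = 1

/-- No parallel arcs. -/
def NoParallel (N : Net V) : Prop := ∀ u v, N.arcs u v ≤ 1

/-- A phylogenetic network on `X`: an `X`-network without parallel arcs. -/
structure IsPhyloNetwork (N : Net V) (X : Set V) extends IsXNetwork N X : Prop where
  noParallel : N.NoParallel

/-- A phylogenetic tree on `X`: a phylogenetic network with no hybrid vertices. -/
structure IsPhyloTree (N : Net V) (X : Set V) extends IsPhyloNetwork N X : Prop where
  noHybrid : ∀ v, ¬ N.IsHybrid v

/-- A vertex with indegree one and outdegree one (to be suppressed). -/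
def Suppressible (N : Net V) (v : V) : Prop :=
  v ∈ N.verts ∧ N.inDeg v = 1 ∧ N.outDeg v = 1

/-- The graph obtained from `N` by suppressing all vertices of indegree one and
outdegree one: kept vertices are the non-suppressible ones, and the number of
arcs from `u` to `w` is the number of directed paths from `u` to `w` in `N`
all of whose inner vertices are suppressible. -/
noncomputable def suppr (N : Net V) : Net V where
  verts := {v ∈ N.verts | ¬ N.Suppressible v}
  arcs := fun u w =>
    if u ∈ N.verts ∧ ¬ N.Suppressible u ∧ w ∈ N.verts ∧ ¬ N.Suppressible w then
      Set.ncard {l : List (Arc V) | N.WalkFrom u l ∧ l ≠ [] ∧ endOf u l = w ∧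
        ∀ x ∈ innerVerts u l, N.Suppressible x}
    else 0
  root := N.root

/-- `g` realizes an isomorphism of rooted multigraphs from `N` to `N'`. -/
def NetIsoVia {W : Type w} (N : Net V) (N' : Net W) (g : V → W) : Prop :=
  Set.BijOn g N.verts N'.verts ∧
    (∀ u ∈ N.verts, ∀ v ∈ N.verts, N'.arcs (g u) (g v) = N.arcs u v) ∧
    g N.root = N'.root

/-- `w` is a vertex-stable ancestor of the leaf `x`: `w` is an interior vertex
lying on every directed path from the root to `x`. -/
def IsVSAncestor (N : Net V) (w x : V) : Prop :=
  N.IsInterior w ∧ N.IsLeaf x ∧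
    ∀ l, N.WalkFrom N.root l → endOf N.root l = x → w ∈ walkVerts N.root l

/-- `N` is tree-child: every interior vertex has a child that is a tree vertex. -/
def TreeChild (N : Net V) : Prop :=
  ∀ v, N.IsInterior v → ∃ u, 0 < N.arcs v u ∧ N.IsTreeVert u

/-- `N` is compressed: no arc has both its tail and its head hybrid. -/
def Compressed (N : Net V) : Prop :=
  ∀ u v, 0 < N.arcs u v → ¬(N.IsHybrid u ∧ N.IsHybrid v)

/-- `N` is reticulation-visible: every hybrid vertex is a vertex-stable
ancestor of some leaf. -/
def RetVisible (N : Net V) (X : Set V) : Prop :=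
  ∀ h, N.IsHybrid h → ∃ x ∈ X, N.IsVSAncestor h x

/-- The set of arc tokens used by a walk. -/
def arcsOf (l : List (Arc V)) : Set (Arc V) := {a | a ∈ l}

/-- The union of the directed paths `p₁` and `p₂` contains a subgraph that is
a reticulation cycle of `N`, i.e. the union of two arc-disjoint non-trivial
directed paths of `N` with the same start vertex and the same end vertex. -/
def ContainsRetCycle (N : Net V) (p₁ p₂ : List (Arc V)) : Prop :=
  ∃ (q₁ q₂ : List (Arc V)) (s e : V),
    N.WalkFrom s q₁ ∧ N.WalkFrom s q₂ ∧ q₁ ≠ [] ∧ q₂ ≠ [] ∧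
    endOf s q₁ = e ∧ endOf s q₂ = e ∧
    Disjoint (arcsOf q₁) (arcsOf q₂) ∧
    arcsOf q₁ ∪ arcsOf q₂ ⊆ arcsOf p₁ ∪ arcsOf p₂

/-- The set of vertices having a descendant in `Y`. -/
def keepSet (N : Net V) (Y : Set V) : Set V := {v ∈ N.verts | ∃ y ∈ Y, N.Reaches v y}

/-- The result of the leaf-removing operations applied to all leaves outside
`Y`: restrict to the vertices having a descendant in `Y` and suppress all
resulting vertices of indegree one and outdegree one. -/
noncomputable def restrictNet (N : Net V) (Y : Set V) : Net V :=
  Net.suppr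
    { verts := N.keepSet Y
      arcs := fun u w => if u ∈ N.keepSet Y ∧ w ∈ N.keepSet Y then N.arcs u w else 0
      root := N.root }

end Net

/-- A labelled rooted directed multigraph: the data of a MUL-tree on the
label set: `lab x` is the set of leaves labelled `x`. -/
structure LNet (V : Type u) (L : Type v) extends Net V where
  lab : L → Set V

namespace LNet

variable {V : Type u} {L : Type v}

/-- `M` is a MUL-tree on `X`: a rooted tree whose root has indegree `0`, with
no vertex of indegree one and outdegree one, in which every leaf carries
exactly one label from `X` and every label of `X` occurs. -/
structure IsMulTree (M : LNet V L) (X : Set L) : Prop where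
  pseudo : M.toNet.IsPseudoDAG
  rootInDeg : M.toNet.inDeg M.root = 0
  inDegOne : ∀ v ∈ M.verts, v ≠ M.root → M.toNet.inDeg v = 1
  noSupp : ∀ v, ¬ M.toNet.Suppressible v
  labLeaf : ∀ x ∈ X, ∀ l ∈ M.lab x, M.toNet.IsLeaf l
  labNonempty : ∀ x ∈ X, (M.lab x).Nonempty
  labCover : ∀ l, M.toNet.IsLeaf l → ∃! x, x ∈ X ∧ l ∈ M.lab x
  labOff : ∀ x, x ∉ X → M.lab x = ∅

/-- The set of vertices below `v`. -/
def belowSet (M : LNet V L) (v : V) : Set V := {w | M.toNet.Reaches v w}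

/-- The subMUL-tree `M_v` of `M` rooted at the vertex `v` (delete the incoming
arc of `v` and restrict the labelling). -/
noncomputable def subAt (M : LNet V L) (v : V) : LNet V L where
  verts := M.belowSet v
  arcs := fun u w => if u ∈ M.belowSet v ∧ w ∈ M.belowSet v then M.arcs u w else 0
  root := v
  lab := fun x => M.lab x ∩ M.belowSet v

/-- `η` realizes an isomorphism of MUL-trees (same label type). -/
def MulIsoVia {V' : Type w} (M : LNet V L) (M' : LNet V' L) (η : V → V') : Prop :=
  Set.BijOn η M.verts M'.verts ∧
    (∀ u ∈ M.verts, ∀ w ∈ M.verts, M'.arcs (η u) (η w) = M.arcs u w) ∧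
    η M.root = M'.root ∧
    ∀ x : L, η '' (M.lab x ∩ M.verts) = M'.lab x ∩ M'.verts

/-- Two labelled trees (on the same label type) are isomorphic. -/
def MulIso {V' : Type w} (M : LNet V L) (M' : LNet V' L) : Prop := ∃ η, MulIsoVia M M' η

/-- `η` realizes an isomorphism of MUL-trees on `X` modulo the label
translation `e`. -/
def MulIsoRelVia {V' : Type w} {L' : Type*} (M : LNet V L) (X : Set L)
    (M' : LNet V' L') (e : L → L') (η : V → V') : Prop :=
  Set.BijOn η M.verts M'.verts ∧
    (∀ u ∈ M.verts, ∀ w ∈ M.verts, M'.arcs (η u) (η w) = M.arcs u w) ∧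
    η M.root = M'.root ∧
    ∀ x ∈ X, η '' (M.lab x ∩ M.verts) = M'.lab (e x) ∩ M'.verts

/-- The equivalence relation `∼`: `u ∼ w` iff `u = w` or the subMUL-trees
`M_u` and `M_w` are isomorphic. -/
def Sim (M : LNet V L) (u w : V) : Prop := u = w ∨ MulIso (M.subAt u) (M.subAt w)

/-- The `∼`-equivalence class of `w`; the map `eqClass M : V(M) → V(M)/∼`
plays the role of the projection `p_M` onto the quotient. -/
def eqClass (M : LNet V L) (w : V) : Set V := {u ∈ M.verts | M.Sim u w}

/-- The quotient `V(M)/∼`, realized as the set of `∼`-equivalence classes. -/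
def classSet (M : LNet V L) : Set (Set V) := M.eqClass '' M.verts

/-- `c` is a `∼`-equivalence class of `M`. -/
def IsClassOf (M : LNet V L) (c : Set V) : Prop := ∃ w ∈ M.verts, c = M.eqClass w

/-- The class `c` gets a hybrid vertex above it in the fold-up of `M`:
some (equivalently, any) member of `c` has its parent in a strictly smaller
`∼`-class. -/
def ClassHyb (M : LNet V L) (c : Set V) : Prop :=
  ∃ w ∈ M.verts, c = M.eqClass w ∧ ∃ u, 0 < M.arcs u w ∧ (M.eqClass u).ncard < c.ncard

/-- `d` is the class of a parent of a member of `c`. -/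
def IsParentClassOf (M : LNet V L) (d c : Set V) : Prop :=
  ∃ u w, 0 < M.arcs u w ∧ d = M.eqClass u ∧ c = M.eqClass w

/-- The number of children inside `c` of a member of `d`. -/
noncomputable def childMult (M : LNet V L) (d c : Set V) : ℕ :=
  sSup {n : ℕ | ∃ u ∈ d, n = ∑ᶠ w ∈ c, M.arcs u w}

/-- The fold-up `F(M)` of the MUL-tree `M`: the `X`-network obtained by
repeatedly identifying all maximal inextendible subMUL-trees, subdividing
the incoming arcs of their roots and identifying the subdivision vertices.
Concretely, its tree vertices are the `∼`-classes of `M`, there is a hybrid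
vertex above each class whose members have parents in a strictly smaller
class, and arcs are induced by the arcs of `M`. -/
noncomputable def foldUp (M : LNet V L) : Net (Set V ⊕ Set V) where
  verts := (Sum.inl '' {c | M.IsClassOf c}) ∪
    (Sum.inr '' {c | M.IsClassOf c ∧ M.ClassHyb c})
  arcs := fun a b =>
    match a, b with
    | Sum.inl d, Sum.inl c =>
        if M.IsClassOf d ∧ M.IsClassOf c ∧ ¬ M.ClassHyb c ∧ M.IsParentClassOf d c
        then 1 else 0
    | Sum.inl d, Sum.inr c =>
        if M.IsClassOf d ∧ M.IsClassOf c ∧ M.ClassHyb c ∧ M.IsParentClassOf d c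
        then M.childMult d c else 0
    | Sum.inr c, Sum.inl c' =>
        if c' = c ∧ M.IsClassOf c ∧ M.ClassHyb c then 1 else 0
    | Sum.inr _, Sum.inr _ => 0
  root := Sum.inl (M.eqClass M.root)

/-- The `∼`-class of the leaves labelled `x`. -/
def labClass (M : LNet V L) (x : L) : Set V := {w ∈ M.verts | ∃ l ∈ M.lab x, M.Sim w l}

/-- The leaf set of the fold-up of `M`, identified with `X`. -/
def foldX (M : LNet V L) (X : Set L) : Set (Set V ⊕ Set V) :=
  (fun x => Sum.inl (M.labClass x)) '' X

/-- A MUL-tree is sound if its fold-up is a phylogenetic network. -/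
def IsSound (M : LNet V L) (X : Set L) : Prop :=
  M.IsMulTree X ∧ Net.IsPhyloNetwork M.foldUp (M.foldX X)

/-- An `X`-set of `M`: a set of leaves containing exactly one leaf labelled
`x` for every `x ∈ X`. -/
def IsXSet (M : LNet V L) (X : Set L) (C : Set V) : Prop :=
  (∀ l ∈ C, M.toNet.IsLeaf l) ∧ ∀ x ∈ X, ∃! l, l ∈ C ∧ l ∈ M.lab x

/-- `r` is the last common ancestor of the elements of `C`. -/
def IsLca (M : LNet V L) (r : V) (C : Set V) : Prop :=
  r ∈ M.verts ∧ (∀ c ∈ C, M.toNet.Reaches r c) ∧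
    ∀ r' ∈ M.verts, (∀ c ∈ C, M.toNet.Reaches r' c) → M.toNet.Reaches r' r

/-- The last common ancestor `r_C` of the elements of `C`. -/
noncomputable def lcaOf [Nonempty V] (M : LNet V L) (C : Set V) : V :=
  Classical.epsilon fun r => M.IsLca r C

/-- The vertex set of `M_C⁺`: all vertices on a directed path from
`lca(C)` to a leaf in `C`. -/
def subPlusVerts [Nonempty V] (M : LNet V L) (C : Set V) : Set V :=
  {v | M.toNet.Reaches (M.lcaOf C) v ∧ ∃ c ∈ C, M.toNet.Reaches v c}

/-- The tree `M_C⁺` spanned by the leaves in `C`; the canonical injection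
`ξ_C⁺ : V(M_C⁺) → V(M)` is the set-inclusion `subPlusVerts M C ⊆ V`, so that
the map `ξ̄_C⁺ = p_M ∘ ξ_C⁺` is realized by `eqClass M` restricted to
`subPlusVerts M C`. -/
noncomputable def subPlus [Nonempty V] (M : LNet V L) (C : Set V) : Net V where
  verts := M.subPlusVerts C
  arcs := fun u w => if u ∈ M.subPlusVerts C ∧ w ∈ M.subPlusVerts C then M.arcs u w else 0
  root := M.lcaOf C

/-- The phylogenetic tree `M_C` induced by the `X`-set `C`: suppress all
vertices of indegree one and outdegree one in `M_C⁺`. -/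
noncomputable def mC [Nonempty V] (M : LNet V L) (C : Set V) : Net V := (M.subPlus C).suppr

/-- The set `V(M)^C`: the vertex `r_C` together with all vertices `v` such
that no vertex below `v` is `∼`-equivalent to `r_C`. -/
def vmc [Nonempty V] (M : LNet V L) (C : Set V) : Set V :=
  insert (M.lcaOf C) {v ∈ M.verts | ∀ u, M.toNet.Reaches v u → ¬ M.Sim u (M.lcaOf C)}

/-- Vertices of `M` having a descendant leaf labelled by an element of `Y`. -/
def keepSet (M : LNet V L) (Y : Set L) : Set V :=
  {v ∈ M.verts | ∃ w, M.toNet.Reaches v w ∧ ∃ y ∈ Y, w ∈ M.lab y}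

/-- The MUL-tree `M_Y` obtained from `M` by the leaf-removing operation:
remove all leaves labelled outside `Y` (together with everything having no
leaf labelled in `Y` below it) and suppress all resulting vertices of
indegree one and outdegree one. -/
noncomputable def restrictMul (M : LNet V L) (Y : Set L) : LNet V L where
  toNet := Net.suppr
    { verts := M.keepSet Y
      arcs := fun u w => if u ∈ M.keepSet Y ∧ w ∈ M.keepSet Y then M.arcs u w else 0
      root := M.root }
  lab := fun y => if y ∈ Y then M.lab y else ∅

end LNet

namespace Net

variable {V : Type u}

/-- The vertex set of the un-fold `U(N)` of `N`: the set `π⁻(N)` of directed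
paths of `N` starting at the root and ending in a tree vertex.  (The
bijection `Ψ_N : π⁻(N) → V(U(N))` is thereby realized as the identity.) -/
def unfoldVerts (N : Net V) : Set (List (Arc V)) :=
  {p | N.WalkFrom N.root p ∧ N.IsTreeVert (endOf N.root p)}

/-- The un-fold `U(N)` of `N`, a MUL-tree on `X`: vertices are the directed
paths from the root ending in tree vertices, arcs correspond to extending
such a path by a single arc followed by a (possibly empty) run of hybrid
vertices, and the leaves labelled `x ∈ X` are the paths ending in `x`. -/
noncomputable def unfoldNet (N : Net V) (X : Set V) : LNet (List (Arc V)) V where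
  verts := unfoldVerts N
  arcs := fun p q =>
    if p ∈ unfoldVerts N ∧ q ∈ unfoldVerts N ∧
        ∃ r, r ≠ [] ∧ q = p ++ r ∧ ∀ a ∈ r.dropLast, N.IsHybrid (a : Arc V).2.1
    then 1 else 0
  root := []
  lab := fun x => if x ∈ X then {p ∈ unfoldVerts N | endOf N.root p = x} else ∅

end Net

/-- `N` is a stable phylogenetic network on `X`: `N` is a phylogenetic
network isomorphic to the fold-up of its un-fold, via an isomorphism fixing
`X` pointwise (i.e. sending each leaf `x` to the leaf of `F(U(N))`
corresponding to `x`). -/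
def IsStable {V : Type u} (N : Net V) (X : Set V) : Prop :=
  Net.IsPhyloNetwork N X ∧
    ∃ g, Net.NetIsoVia N (Net.unfoldNet N X).foldUp g ∧
      ∀ x ∈ X, g x = Sum.inl ((Net.unfoldNet N X).labClass x)

/-- `T` is endorsed by the MUL-tree `M` via the `X`-set `C`, the isomorphism
`T ≅ M_C` being realized by `σ` (which sends each `x ∈ X` to the unique leaf
of `C` labelled `x`). -/
def EndorsedVia {V : Type u} {W : Type w} [Nonempty W] (T : Net V) (X : Set V)
    (M : LNet W V) (C : Set W) (σ : V → W) : Prop :=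
  M.IsXSet X C ∧ Net.NetIsoVia T (M.mC C) σ ∧ ∀ x ∈ X, σ x ∈ C ∧ σ x ∈ M.lab x

/-- `T` is endorsed by the MUL-tree `M` via the `X`-set `C`. -/
def Endorsed {V : Type u} {W : Type w} [Nonempty W] (T : Net V) (X : Set V)
    (M : LNet W V) (C : Set W) : Prop :=
  ∃ σ, EndorsedVia T X M C σ

/-- `N'` is a subgraph of `N` with leaf set `X` which is (an isomorphic copy,
via the identity on `X`, of) a subdivision of `T`: suppressing all vertices
of indegree one and outdegree one in `N'` yields a tree isomorphic to `T`
via an isomorphism `g` fixing `X` pointwise. -/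
def IsDisplayWitness {V : Type u} (N : Net V) (X : Set V) (T : Net V)
    (N' : Net V) (g : V → V) : Prop :=
  N'.verts ⊆ N.verts ∧ (∀ u v, N'.arcs u v ≤ N.arcs u v) ∧
    N'.root ∈ N'.verts ∧ (∀ v ∈ N'.verts, N'.Reaches N'.root v) ∧
    (∀ v, N'.IsLeaf v ↔ v ∈ X) ∧
    Net.NetIsoVia T N'.suppr g ∧ ∀ x ∈ X, g x = x

/-- The phylogenetic tree `T` is displayed by `N`. -/
def Displays {V : Type u} (N : Net V) (X : Set V) (T : Net V) : Prop :=
  ∃ N' g, IsDisplayWitness N X T N' g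

/-- The phylogenetic tree `T` is strongly displayed by `N`: it is displayed
via a subdivision whose root is the root of `N`. -/
def StronglyDisplays {V : Type u} (N : Net V) (X : Set V) (T : Net V) : Prop :=
  ∃ N' g, IsDisplayWitness N X T N' g ∧ N'.root = N.root

/-- `G` is a rooted tree. -/
structure IsRootedTree {V : Type u} (G : Net V) : Prop where
  pseudo : G.IsPseudoDAG
  rootInDeg : G.inDeg G.root = 0
  inDegOne : ∀ v ∈ G.verts, v ≠ G.root → G.inDeg v = 1

/-- `T'` is a subdivision of `T` (with the identity on `X`): `T'` is a rooted
tree which, after suppressing all vertices of indegree one and outdegree one,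
is isomorphic to `T` via an isomorphism fixing `X` pointwise. -/
def IsSubdivisionOf {V : Type u} (T' T : Net V) (X : Set V) : Prop :=
  IsRootedTree T' ∧ ∃ g, Net.NetIsoVia T T'.suppr g ∧ ∀ x ∈ X, g x = x

/-- `T` is a base tree for `N`: `N` can be obtained from `T` by subdividing
some arcs of `T`, adding arcs between the subdivision vertices without
creating parallel arcs or directed cycles, and suppressing all subdivision
vertices still of indegree one and outdegree one. -/
def IsBaseTreeFor {V : Type u} (T : Net V) (X : Set V) (N : Net V) : Prop :=
  ∃ T' G : Net V,
    IsSubdivisionOf T' T X ∧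
    G.verts = T'.verts ∧ G.root = T'.root ∧
    (∀ u v, T'.arcs u v ≤ G.arcs u v) ∧
    (∀ u v, T'.arcs u v ≠ G.arcs u v → T'.Suppressible u ∧ T'.Suppressible v) ∧
    G.NoParallel ∧ G.Acyclic ∧
    ∃ h, Net.NetIsoVia G.suppr N h ∧ ∀ x ∈ X, h x = x

end Phylo

/-!
A vertex `u` strictly below `r` in a finite acyclic MUL-tree sees strictly fewer vertices
below it than `r` does (it misses `r` itself), so `M_u` and `M_r` cannot be isomorphic.
Hence no vertex below a vertex of `M_C⁺` other than `r_C` is `∼`-equivalent to `r_C`.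
The un-fold of a finite acyclic network is finite and acyclic, since its vertices are
directed walks of bounded length and its arcs extend walks.
-/

namespace Phylo

namespace Net

variable {V : Type u} {N : Net V} {u w : V} {a : Arc V} {l : List (Arc V)}

lemma endOf_cons : endOf u (a :: l) = endOf a.2.1 l := by
  cases l <;> rfl

lemma walkVerts_cons : walkVerts u (a :: l) = u :: walkVerts a.2.1 l := rfl

lemma endOf_mem_walkVerts (u : V) (l : List (Arc V)) : endOf u l ∈ walkVerts u l := by
  induction l generalizing u with
  | nil => exact List.mem_singleton_self u
  | cons a t ih =>
    rw [endOf_cons, walkVerts_cons]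
    exact List.mem_cons_of_mem u (ih a.2.1)

lemma walkFrom_cons_iff :
    N.WalkFrom u (a :: l) ↔ a.1 = u ∧ N.okArc a ∧ N.WalkFrom a.2.1 l := by
  constructor
  · rintro ⟨-, hok, hch, hhd⟩
    obtain ⟨hrel, hch⟩ := List.isChain_cons.mp hch
    have hoka := hok a List.mem_cons_self
    exact ⟨hhd a rfl, hoka, hoka.2.1, fun b hb => hok b (List.mem_cons_of_mem a hb), hch,
      fun b hb => (hrel b hb).symm⟩
  · rintro ⟨hu, hok, -, hoks, hch, hhd⟩
    refine ⟨hu ▸ hok.1, List.forall_mem_cons.mpr ⟨hok, hoks⟩,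
      List.isChain_cons.mpr ⟨fun b hb => (hhd b hb).symm, hch⟩, fun b hb => ?_⟩
    exact Option.mem_some_iff.mp hb ▸ hu

lemma arcRel_of_okArc (h : N.okArc a) : N.ArcRel a.1 a.2.1 :=
  Nat.zero_lt_of_lt h.2.2

lemma WalkFrom.reflTransGen_of_mem_walkVerts (h : N.WalkFrom u l) (hw : w ∈ walkVerts u l) :
    Relation.ReflTransGen N.ArcRel u w := by
  induction l generalizing u with
  | nil =>
    rw [List.mem_singleton.mp hw]
  | cons a t ih =>
    obtain ⟨rfl, hok, ht⟩ := walkFrom_cons_iff.mp h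
    rcases List.mem_cons.mp hw with rfl | hw
    · rfl
    · exact .head (arcRel_of_okArc hok) (ih ht hw)

lemma WalkFrom.mem_verts_of_mem_walkVerts (h : N.WalkFrom u l) (hw : w ∈ walkVerts u l) :
    w ∈ N.verts := by
  induction l generalizing u with
  | nil => exact List.mem_singleton.mp hw ▸ h.1
  | cons a t ih =>
    obtain ⟨rfl, -, ht⟩ := walkFrom_cons_iff.mp h
    rcases List.mem_cons.mp hw with rfl | hw
    · exact h.1
    · exact ih ht hw

lemma WalkFrom.append {l' : List (Arc V)} (h : N.WalkFrom u l)
    (h' : N.WalkFrom (endOf u l) l') :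
    N.WalkFrom u (l ++ l') ∧ endOf u (l ++ l') = endOf (endOf u l) l' := by
  induction l generalizing u with
  | nil => exact ⟨h', rfl⟩
  | cons a t ih =>
    obtain ⟨ha, hok, ht⟩ := walkFrom_cons_iff.mp h
    rw [endOf_cons] at h'
    rw [List.cons_append, endOf_cons, endOf_cons]
    obtain ⟨hw, he⟩ := ih ht h'
    exact ⟨walkFrom_cons_iff.mpr ⟨ha, hok, hw⟩, he⟩

lemma Reaches.refl (hu : u ∈ N.verts) : N.Reaches u u :=
  ⟨[], ⟨hu, by simp, List.isChain_nil, by simp⟩, rfl⟩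

lemma Reaches.trans {v : V} (h₁ : N.Reaches u v) (h₂ : N.Reaches v w) : N.Reaches u w := by
  obtain ⟨l₁, hw₁, rfl⟩ := h₁
  obtain ⟨l₂, hw₂, rfl⟩ := h₂
  obtain ⟨hw, he⟩ := hw₁.append hw₂
  exact ⟨l₁ ++ l₂, hw, he⟩

lemma Reaches.left_mem_verts (h : N.Reaches u w) : u ∈ N.verts := by
  obtain ⟨_, hl, -⟩ := h
  exact hl.1

lemma Reaches.right_mem_verts (h : N.Reaches u w) : w ∈ N.verts := by
  obtain ⟨l, hl, rfl⟩ := h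
  exact hl.mem_verts_of_mem_walkVerts (endOf_mem_walkVerts u l)

lemma Reaches.reflTransGen (h : N.Reaches u w) : Relation.ReflTransGen N.ArcRel u w := by
  obtain ⟨l, hl, rfl⟩ := h
  exact hl.reflTransGen_of_mem_walkVerts (endOf_mem_walkVerts u l)

lemma Acyclic.reaches_antisymm (hac : N.Acyclic) (h₁ : N.Reaches u w) (h₂ : N.Reaches w u) :
    u = w := by
  rcases Relation.reflTransGen_iff_eq_or_transGen.mp h₁.reflTransGen with rfl | h₁'
  · rfl
  rcases Relation.reflTransGen_iff_eq_or_transGen.mp h₂.reflTransGen with rfl | h₂'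
  · rfl
  exact absurd (h₁'.trans h₂') (hac u)

lemma Acyclic.walkVerts_nodup (hac : N.Acyclic) (h : N.WalkFrom u l) :
    (walkVerts u l).Nodup := by
  induction l generalizing u with
  | nil => exact List.nodup_singleton u
  | cons a t ih =>
    obtain ⟨rfl, hok, ht⟩ := walkFrom_cons_iff.mp h
    rw [walkVerts_cons]
    refine List.nodup_cons.mpr ⟨fun hmem => hac a.1 ?_, ih ht⟩
    exact .head' (arcRel_of_okArc hok) (ht.reflTransGen_of_mem_walkVerts hmem)

lemma Acyclic.length_lt_ncard (hac : N.Acyclic) (hfin : N.verts.Finite)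
    (h : N.WalkFrom u l) : l.length < N.verts.ncard := by
  have hsub : ((walkVerts u l).toFinset : Set V) ⊆ N.verts := fun w hw =>
    h.mem_verts_of_mem_walkVerts (List.mem_toFinset.mp hw)
  have hcard := Set.ncard_le_ncard hsub hfin
  rw [Set.ncard_coe_finset, List.toFinset_card_of_nodup (hac.walkVerts_nodup h)] at hcard
  simpa [walkVerts] using hcard

lemma finite_okArc (hfin : N.verts.Finite) : {a | N.okArc a}.Finite := by
  refine ((hfin.prod hfin).biUnion fun p _ =>
    (Set.finite_Iio (N.arcs p.1 p.2)).image fun i => (p.1, p.2, i)).subset ?_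
  rintro ⟨v, w, i⟩ ⟨hv, hw, hi⟩
  exact Set.mem_biUnion (x := (v, w)) ⟨hv, hw⟩ ⟨i, hi, rfl⟩

lemma Acyclic.finite_walkFrom (hac : N.Acyclic) (hfin : N.verts.Finite) (u : V) :
    {l | N.WalkFrom u l}.Finite := by
  have : Finite {a // N.okArc a} := (finite_okArc hfin).to_subtype
  refine ((List.finite_length_le {a // N.okArc a} N.verts.ncard).image
    (List.map Subtype.val)).subset ?_
  intro l hl
  refine ⟨l.attachWith _ hl.2.1, ?_, List.attachWith_map_subtype_val hl.2.1⟩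
  simpa using (hac.length_lt_ncard hfin hl).le

lemma unfoldNet_arcRel_length {X : Set V} {p q : List (Arc V)}
    (h : (unfoldNet N X).ArcRel p q) : p.length < q.length := by
  simp only [ArcRel, unfoldNet] at h
  split_ifs at h with hpq
  · obtain ⟨-, -, r, hr, rfl, -⟩ := hpq
    simpa using List.length_pos_iff.mpr hr
  · exact absurd h (lt_irrefl 0)

lemma unfoldNet_acyclic (X : Set V) : (unfoldNet N X).Acyclic := by
  intro p hp
  have hlt : Relation.TransGen (· < ·) p.length p.length :=
    hp.lift List.length fun _ _ => unfoldNet_arcRel_length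
  rw [Relation.transGen_eq_self] at hlt
  exact lt_irrefl _ hlt

lemma unfoldNet_verts_finite {X : Set V} (hfin : N.verts.Finite) (hac : N.Acyclic) :
    (unfoldNet N X).verts.Finite :=
  (hac.finite_walkFrom hfin N.root).subset fun _ hp => hp.1

end Net

namespace LNet

variable {V : Type u} {L : Type v} {M : LNet V L} {r u v : V}

lemma not_sim_of_reaches (hfin : M.verts.Finite) (hac : M.Acyclic)
    (hru : M.Reaches r u) (hne : u ≠ r) : ¬ M.Sim u r := by
  rintro (heq | ⟨η, hbij, -⟩)
  · exact hne heq
  have hsub : M.belowSet u ⊆ M.belowSet r := fun _ hw => hru.trans hw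
  have hcard : (M.belowSet r).ncard = (M.belowSet u).ncard := calc
    (M.belowSet r).ncard = (η '' M.belowSet u).ncard := congrArg Set.ncard hbij.image_eq.symm
    _ = (M.belowSet u).ncard := hbij.injOn.ncard_image
  have heq := Set.eq_of_subset_of_ncard_le hsub hcard.le
    (hfin.subset fun _ hw => Net.Reaches.right_mem_verts hw)
  have hur : r ∈ M.belowSet u := heq ▸ (Net.Reaches.refl hru.left_mem_verts : r ∈ M.belowSet r)
  exact hne (hac.reaches_antisymm hur hru)

lemma eq_of_reaches_of_sim (hfin : M.verts.Finite) (hac : M.Acyclic) {w : V}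
    (hv : M.Reaches r v) (hw : M.Reaches v w) (hsim : M.Sim w r) : v = r := by
  by_contra hvr
  have hwr : w ≠ r := by
    rintro rfl
    exact hvr (hac.reaches_antisymm hw hv)
  exact not_sim_of_reaches hfin hac (hv.trans hw) hwr hsim

lemma subPlusVerts_subset_vmc [Nonempty V] (hfin : M.verts.Finite) (hac : M.Acyclic)
    (C : Set V) : M.subPlusVerts C ⊆ M.vmc C := by
  rintro v ⟨hv, -⟩
  by_cases hvr : v = M.lcaOf C
  · exact hvr ▸ Set.mem_insert _ _
  exact Or.inr ⟨hv.right_mem_verts,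
    fun _ hw hsim => hvr (eq_of_reaches_of_sim hfin hac hv hw hsim)⟩

end LNet

theorem image_subset_vmc_general {V : Type u} (X : Set V) (N : Net V)
    (hN : IsStable N X)
    (C : Set (List (Arc V))) :
    (Net.unfoldNet N X).eqClass '' ((Net.unfoldNet N X).subPlusVerts C) ⊆
      (Net.unfoldNet N X).eqClass '' ((Net.unfoldNet N X).vmc C) :=
  Set.image_mono <| LNet.subPlusVerts_subset_vmc
    (Net.unfoldNet_verts_finite hN.1.finite hN.1.acyclic) (Net.unfoldNet_acyclic X) C

/-- **Lemma 5.**  Let `N` be a stable phylogenetic network on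
`X`, let `M = U(N)`, and let `C` be an `X`-set of `M`.  Then
`ξ̄_C⁺(V(M_C⁺)) ⊆ V(M)^C/∼`. -/
theorem image_subset_vmc {V : Type u} (X : Set V) (N : Net V)
    (hX : 3 ≤ X.ncard) (hN : IsStable N X)
    (C : Set (List (Arc V))) (hC : (Net.unfoldNet N X).IsXSet X C) :
    (Net.unfoldNet N X).eqClass '' ((Net.unfoldNet N X).subPlusVerts C) ⊆
      (Net.unfoldNet N X).eqClass '' ((Net.unfoldNet N X).vmc C) :=
  image_subset_vmc_general X N hN C

end Phylo
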